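/- arXiv:math/0106123 — 2 statements merged into one kernel-verified Lean document; each statement's English description precedes it below -/
import Mathlib

section
/- For every integer L ≥ 0, the numbers S_L(n,l) satisfy: S_L(0,0) = 1; S_L(n,0) = 0 for n > 0; S_L(n,l) = 0 whenever l > n; and for all l ≥ 1 and n ≥ 0, S_L(n+1,l) = ∑_{k=l−1}^{n} C(n,k) · C(n+1,k)^L · S_L(k,l−1), where C(m,j) denotes the binomial coefficient. -/
open PowerSeries Finset

/-- The series `₀F_L(1,…,1;z) − 1 = ∑_{k≥1} z^k/(k!)^{L+1}` over `ℚ`. -/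
noncomputable def hypFsub1 (L : ℕ) : PowerSeries ℚ :=
  PowerSeries.mk fun k => if k = 0 then 0 else 1 / (k.factorial : ℚ) ^ (L + 1)

/-- The exponential `exp f = ∑_{l≥0} f^l / l!` of a power series `f` with zero
constant term (for such `f`, `coeff n (f^l) = 0` for `l > n`, so the finite sum
below is the full exponential series). -/
noncomputable def expPS (f : PowerSeries ℚ) : PowerSeries ℚ :=
  PowerSeries.mk fun n =>
    ∑ l ∈ Finset.range (n + 1), PowerSeries.coeff n (f ^ l) / (l.factorial : ℚ)

/-- `b_L(n) = (n!)^{L+1} · [z^n] exp(₀F_L(z) − 1)`. -/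
noncomputable def bL (L n : ℕ) : ℚ :=
  (n.factorial : ℚ) ^ (L + 1) * PowerSeries.coeff n (expPS (hypFsub1 L))

/-- `S_L(n,l) = ((n!)^{L+1}/l!) · [z^n] (₀F_L(z) − 1)^l`, the generalized
Stirling numbers of the second kind of type `L`. -/
noncomputable def SL (L n l : ℕ) : ℚ :=
  (n.factorial : ℚ) ^ (L + 1) / (l.factorial : ℚ) *
    PowerSeries.coeff n (hypFsub1 L ^ l)

/-- The series `∑_{k≥p+1} z^k/(k!)^{L+1}` over `ℚ`. -/
noncomputable def hypFtail (L p : ℕ) : PowerSeries ℚ :=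
  PowerSeries.mk fun k => if k ≤ p then 0 else 1 / (k.factorial : ℚ) ^ (L + 1)

/-- `b_L(p,n) = (n!)^{L+1} · [z^n] exp(∑_{k≥p+1} z^k/(k!)^{L+1})`. -/
noncomputable def bLp (L p n : ℕ) : ℚ :=
  (n.factorial : ℚ) ^ (L + 1) * PowerSeries.coeff n (expPS (hypFtail L p))

/-! With `F = ∑_{k≥1} z^k/(k!)^{L+1}`, comparing the coefficients of `z^n` in
`(F^{m+1})' = (m+1) F^m F'` writes `(n+1)·[z^{n+1}] F^{m+1}` as a convolution of `[z^i] F^m` with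
`(j+1)/((j+1)!)^{L+1}`, `i + j = n`. The identity
`((n+1)!)^{L+1} (j+1) = C(n,i) C(n+1,i)^L (i!)^{L+1} ((j+1)!)^{L+1} (n+1)` turns this into the
recurrence. The boundary values hold because `F` has zero constant term, so `F^l` has order `≥ l`. -/

lemma coeff_pow_eq_zero_of_lt {R : Type*} [CommSemiring R] {f : R⟦X⟧}
    (hf : constantCoeff f = 0) {n l : ℕ} (h : n < l) : coeff n (f ^ l) = 0 :=
  coeff_of_lt_order n ((Nat.cast_lt.2 h).trans_le (le_order_pow_of_constantCoeff_eq_zero l hf))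

lemma coeff_succ_pow_succ_mul {R : Type*} [CommSemiring R] (f : R⟦X⟧) (n m : ℕ) :
    coeff (n + 1) (f ^ (m + 1)) * (n + 1) =
      (m + 1) * ∑ ij ∈ antidiagonal n,
        coeff ij.1 (f ^ m) * (coeff (ij.2 + 1) f * (ij.2 + 1)) := by
  rw [← coeff_derivative, derivative_pow, Nat.add_sub_cancel, mul_assoc, ← map_natCast C,
    coeff_C_mul, coeff_mul]
  simp only [coeff_derivative]
  push_cast
  rfl

lemma constantCoeff_hypFsub1 (L : ℕ) : constantCoeff (hypFsub1 L) = 0 := by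
  simp [hypFsub1, ← coeff_zero_eq_constantCoeff_apply]

lemma coeff_succ_hypFsub1 (L k : ℕ) :
    coeff (k + 1) (hypFsub1 L) = 1 / ((k + 1).factorial : ℚ) ^ (L + 1) := by
  simp [hypFsub1]

lemma factorial_add_succ_pow_mul (L i j : ℕ) :
    (i + j + 1).factorial ^ (L + 1) * (j + 1) =
      (i + j).choose i * (i + j + 1).choose i ^ L * i.factorial ^ (L + 1) *
        (j + 1).factorial ^ (L + 1) * (i + j + 1) := by
  have hsub : i + j + 1 - i = j + 1 := by omega
  have hfac : (i + j + 1).choose i * i.factorial * (j + 1).factorial = (i + j + 1).factorial := by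
    simpa only [hsub] using Nat.choose_mul_factorial_mul_factorial (by omega : i ≤ i + j + 1)
  have hchoose : (i + j).choose i * (i + j + 1) = (i + j + 1).choose i * (j + 1) := by
    simpa only [hsub] using Nat.choose_mul_succ_eq (i + j) i
  rw [← hfac]
  calc _ = (i + j + 1).choose i ^ L * i.factorial ^ (L + 1) * (j + 1).factorial ^ (L + 1) *
        ((i + j + 1).choose i * (j + 1)) := by ring
    _ = _ := by rw [← hchoose]; ring

lemma SL_succ_succ (L n m : ℕ) :
    SL L (n + 1) (m + 1) =
      ∑ k ∈ range (n + 1), (n.choose k : ℚ) * ((n + 1).choose k : ℚ) ^ L * SL L k m := by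
  have hcoeff := coeff_succ_pow_succ_mul (hypFsub1 L) n m
  rw [← eq_div_iff (by positivity)] at hcoeff
  rw [← Nat.sum_antidiagonal_eq_sum_range_succ
      (fun i _ => (n.choose i : ℚ) * ((n + 1).choose i : ℚ) ^ L * SL L i m),
    SL, hcoeff, mul_sum, sum_div, mul_sum]
  refine sum_congr rfl fun ⟨i, j⟩ hij => ?_
  obtain rfl : i + j = n := mem_antidiagonal.1 hij
  have key := congrArg (Nat.cast : ℕ → ℚ) (factorial_add_succ_pow_mul L i j)
  push_cast at key
  simp only [SL, coeff_succ_hypFsub1, Nat.factorial_succ m]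
  push_cast
  field_simp
  linear_combination (coeff i (hypFsub1 L ^ m)) * key

lemma SL_eq_zero_of_lt (L : ℕ) {n l : ℕ} (h : n < l) : SL L n l = 0 := by
  simp [SL, coeff_pow_eq_zero_of_lt (constantCoeff_hypFsub1 L) h]

/-- boundary values and recurrence
`S_L(n+1,l) = ∑_{k=l−1}^{n} C(n,k) · C(n+1,k)^L · S_L(k,l−1)` for `l ≥ 1`. -/
theorem stmt_6 (L : ℕ) :
    SL L 0 0 = 1 ∧
    (∀ n : ℕ, 0 < n → SL L n 0 = 0) ∧
    (∀ n l : ℕ, n < l → SL L n l = 0) ∧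
    ∀ l : ℕ, 1 ≤ l → ∀ n : ℕ,
      SL L (n + 1) l =
        ∑ k ∈ Finset.Icc (l - 1) n,
          (n.choose k : ℚ) * ((n + 1).choose k : ℚ) ^ L * SL L k (l - 1) := by
  refine ⟨by simp [SL], fun n hn => by simp [SL, coeff_one, hn.ne'],
    fun n l => SL_eq_zero_of_lt L, fun l hl n => ?_⟩
  obtain ⟨m, rfl⟩ := Nat.exists_eq_add_of_le' hl
  rw [Nat.add_sub_cancel, SL_succ_succ]
  refine (sum_subset (fun k hk => ?_) fun k hk hk' => ?_).symm
  · simp only [mem_Icc, mem_range] at hk ⊢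
    omega
  · simp only [mem_Icc, mem_range, not_and, not_le] at hk hk'
    rw [SL_eq_zero_of_lt L (by omega : k < m), mul_zero]
end

section
/- For all integers L ≥ 0, p ≥ 0 and every natural number n, the rational number b_L(p,n) is a nonnegative integer. -/
/-!
Writing `E = expPS f` with `f = hypFtail L p`, the exponential satisfies `E' = E f'`. Comparing
coefficients of `z^n` and multiplying by `((n+1)!)^{L+1}` turns this into the recurrence
`b_L(p, n+1) = ∑_{i+j=n, j ≥ p} C(n, j) C(n+1, j+1)^L b_L(p, i)` with `b_L(p, 0) = 1`,
whose coefficients are natural numbers, so every `b_L(p, n)` is one by strong induction.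
-/

open PowerSeries Finset

open Nat

theorem Nat.factorial_pow_mul_eq_choose_mul_choose_pow (L i j : ℕ) :
    (i + j + 1)! ^ (L + 1) * (j + 1)
      = (i + j + 1) * (i + j).choose j * (i + j + 1).choose (j + 1) ^ L
          * (i ! * (j + 1)!) ^ (L + 1) := by
  have hj := add_choose_mul_factorial_mul_factorial i j
  have hj1 := add_choose_mul_factorial_mul_factorial i (j + 1)
  rw [← add_assoc] at hj1
  calc (i + j + 1)! ^ (L + 1) * (j + 1)
      = (i + j + 1) * (i + j)! * (j + 1) * (i + j + 1)! ^ L := by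
        rw [factorial_succ (i + j)]; ring
    _ = (i + j + 1) * ((i + j).choose j * i ! * j !) * (j + 1)
          * ((i + j + 1).choose (j + 1) * i ! * (j + 1)!) ^ L := by
        rw [hj, hj1]
    _ = (i + j + 1) * (i + j).choose j * (i + j + 1).choose (j + 1) ^ L
          * (i ! * ((j + 1) * j !)) * (i ! * (j + 1)!) ^ L := by ring
    _ = _ := by rw [← factorial_succ, pow_succ']; ring

namespace PowerSeries

theorem coeff_pow_eq_zero_of_lt {R : Type*} [CommSemiring R] {f : PowerSeries R}
    (hf : constantCoeff f = 0) {n l : ℕ} (h : n < l) : coeff n (f ^ l) = 0 :=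
  X_pow_dvd_iff.mp (pow_dvd_pow_of_dvd (X_dvd_iff.mpr hf) l) n h

noncomputable def expPartialSum (f : PowerSeries ℚ) (N : ℕ) : PowerSeries ℚ :=
  ∑ l ∈ range (N + 1), (l ! : ℚ)⁻¹ • f ^ l

theorem coeff_expPS_eq_coeff_expPartialSum {f : PowerSeries ℚ} (hf : constantCoeff f = 0)
    {n N : ℕ} (hn : n ≤ N) : coeff n (expPS f) = coeff n (expPartialSum f N) := by
  rw [expPS, coeff_mk, expPartialSum, map_sum]
  refine sum_subset (range_subset_range.mpr (by omega)) (fun l _ hl => ?_) |>.trans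
    (sum_congr rfl fun l _ => ?_)
  · rw [coeff_pow_eq_zero_of_lt hf (by simpa using hl), zero_div]
  · rw [coeff_smul, smul_eq_mul, div_eq_inv_mul]

theorem derivative_expPartialSum_succ (f : PowerSeries ℚ) (N : ℕ) :
    d⁄dX ℚ (expPartialSum f (N + 1)) = expPartialSum f N * d⁄dX ℚ f := by
  rw [expPartialSum, map_sum, sum_range_succ', expPartialSum, sum_mul]
  simp only [Derivation.map_smul, derivative_pow, pow_zero, Derivation.map_one_eq_zero,
    smul_zero, add_zero]
  refine sum_congr rfl fun m _ => ?_
  rw [smul_mul_assoc, factorial_succ, add_tsub_cancel_right, mul_assoc, ← nsmul_eq_mul,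
    ← Nat.cast_smul_eq_nsmul ℚ, smul_smul]
  congr 1
  push_cast
  field_simp

theorem derivative_expPS {f : PowerSeries ℚ} (hf : constantCoeff f = 0) :
    d⁄dX ℚ (expPS f) = expPS f * d⁄dX ℚ f := by
  ext n
  rw [coeff_derivative, coeff_expPS_eq_coeff_expPartialSum hf le_rfl, ← coeff_derivative,
    derivative_expPartialSum_succ, coeff_mul, coeff_mul]
  exact sum_congr rfl fun x hx =>
    by rw [coeff_expPS_eq_coeff_expPartialSum hf (HasAntidiagonal.antidiagonal.fst_le hx)]

theorem coeff_succ_expPS_mul {f : PowerSeries ℚ} (hf : constantCoeff f = 0) (n : ℕ) :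
    coeff (n + 1) (expPS f) * (n + 1)
      = ∑ x ∈ antidiagonal n, coeff x.1 (expPS f) * (coeff (x.2 + 1) f * (x.2 + 1)) := by
  simpa only [coeff_derivative, coeff_mul] using congr_arg (coeff n) (derivative_expPS hf)

end PowerSeries

theorem constantCoeff_hypFtail (L p : ℕ) : constantCoeff (hypFtail L p) = 0 := by
  simp [hypFtail, ← coeff_zero_eq_constantCoeff_apply]

theorem coeff_succ_hypFtail (L p j : ℕ) :
    coeff (j + 1) (hypFtail L p) = if p ≤ j then (((j + 1)! : ℚ) ^ (L + 1))⁻¹ else 0 := by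
  simp only [hypFtail, coeff_mk, one_div]
  split_ifs <;> first | rfl | omega

theorem bLp_zero (L p : ℕ) : bLp L p 0 = 1 := by
  simp [bLp, expPS]

theorem bLp_succ (L p n : ℕ) :
    bLp L p (n + 1) = ∑ x ∈ antidiagonal n,
      if p ≤ x.2 then ((n.choose x.2 * (n + 1).choose (x.2 + 1) ^ L : ℕ) : ℚ) * bLp L p x.1
      else 0 := by
  have hrec := coeff_succ_expPS_mul (constantCoeff_hypFtail L p) n
  refine mul_right_cancel₀ (Nat.cast_add_one_ne_zero n) ?_
  rw [bLp, mul_assoc, hrec, mul_sum, sum_mul]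
  refine sum_congr rfl fun ⟨i, j⟩ hij => ?_
  rw [HasAntidiagonal.mem_antidiagonal] at hij
  subst hij
  dsimp only
  rw [coeff_succ_hypFtail]
  split_ifs
  · have hfac := congr_arg (Nat.cast : ℕ → ℚ) (Nat.factorial_pow_mul_eq_choose_mul_choose_pow L i j)
    push_cast at hfac ⊢
    rw [bLp]
    field_simp
    linear_combination coeff i (expPS (hypFtail L p)) * hfac
  · simp

/-- each `b_L(p,n)` is a nonnegative integer. -/
theorem stmt_18 (L p n : ℕ) : ∃ m : ℕ, bLp L p n = (m : ℚ) := by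
  induction n using Nat.strong_induction_on with
  | _ n ih =>
    cases n with
    | zero => exact ⟨1, by rw [bLp_zero, Nat.cast_one]⟩
    | succ n =>
      choose! m hm using ih
      refine ⟨∑ x ∈ antidiagonal n,
        if p ≤ x.2 then n.choose x.2 * (n + 1).choose (x.2 + 1) ^ L * m x.1 else 0, ?_⟩
      rw [bLp_succ]
      push_cast
      refine sum_congr rfl fun x hx => ?_
      rw [hm x.1 (Nat.lt_succ_of_le (HasAntidiagonal.antidiagonal.fst_le hx))]
end
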